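/- arXiv:1808.01394 — 2 statements merged into one kernel-verified Lean document; each statement's English description precedes it below -/
import Mathlib

section
/- For every n ∈ ℕ and λ ∈ (0,n): if the mechanism C_λ is (ε,δ)-differentially private (with neighboring datasets in {0,1}^n differing in at most one coordinate), then the shuffled bit-sum mechanism Π_{n,λ} is (ε,δ)-differentially private. -/
open scoped ENNReal Classical

noncomputable section

namespace ShuffledDP

universe u v w

lemma half_le_one : (2⁻¹ : ℝ≥0∞) ≤ 1 := by
  simp [ENNReal.inv_le_one]

/-- Independent samples from a finite family of PMFs, collected (in order) as a list. -/
noncomputable def indep {α : Type u} : (n : ℕ) → (Fin n → PMF α) → PMF (List α)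
  | 0, _ => PMF.pure []
  | n + 1, f =>
      (f 0).bind fun y => (indep n fun i => f i.succ).bind fun ys => PMF.pure (y :: ys)

/-- `(ε, δ)`-differential privacy of a mechanism `M` with respect to a
neighboring relation `nbr` on inputs. -/
def DPFor {I : Type u} {Z : Type v} (nbr : I → I → Prop) (M : I → PMF Z) (ε δ : ℝ) : Prop :=
  ∀ x x', nbr x x' → ∀ T : Set Z,
    (M x).toOuterMeasure T ≤
      ENNReal.ofReal (Real.exp ε) * (M x').toOuterMeasure T + ENNReal.ofReal δ

/-- Two datasets are neighbors if they differ in at most one coordinate. -/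
def Neighbor {n : ℕ} {X : Type u} (x x' : Fin n → X) : Prop :=
  ∃ j, ∀ i, i ≠ j → x i = x' i

/-- The randomized-response local randomizer `R_{n,λ}`: output the input bit with
probability `1 - λ/n` and a uniformly random bit with probability `λ/n`. -/
noncomputable def rr (n : ℕ) (lam : ℝ) (x : Bool) : PMF Bool :=
  (PMF.bernoulli (min (Real.toNNReal (lam / n)) 1) (min_le_right _ _)).bind fun b =>
    if b then PMF.bernoulli 2⁻¹ (by norm_num) else PMF.pure x

/-- Binomial distribution, valued in `ℕ`. -/
noncomputable def binom (p : ℝ≥0∞) (h : p ≤ 1) (m : ℕ) : PMF ℕ :=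
  (PMF.binomial p.toNNReal (by simpa using ENNReal.toNNReal_mono ENNReal.one_ne_top h) m).map Fin.val

/-- Uniform distribution over the subsets of `Fin n` of size `s`. -/
noncomputable def uniformSubset (n s : ℕ) : PMF (Finset (Fin n)) :=
  if h : ((Finset.univ : Finset (Fin n)).powersetCard s).Nonempty then
    PMF.uniformOfFinset _ h
  else PMF.pure ∅

/-- `∑_{i ∉ H} x_i` for a boolean dataset `x`. -/
def sumOutside {n : ℕ} (H : Finset (Fin n)) (x : Fin n → Bool) : ℕ :=
  ∑ i ∈ Hᶜ, (if x i then 1 else 0)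

/-- The mechanism `C_H`: output `∑_{i ∉ H} x_i + B` with `B ~ Bin(|H|, 1/2)`. -/
noncomputable def CH (n : ℕ) (H : Finset (Fin n)) (x : Fin n → Bool) : PMF ℕ :=
  (binom 2⁻¹ half_le_one H.card).map fun B => sumOutside H x + B

/-- The mechanism `C_s`: sample `H` uniformly among size-`s` subsets, then run `C_H`. -/
noncomputable def Cs (n s : ℕ) (x : Fin n → Bool) : PMF ℕ :=
  (uniformSubset n s).bind fun H => CH n H x

/-- The mechanism `C_λ`: sample `s ~ Bin(n, λ/n)`, then run `C_s`. -/
noncomputable def Cmech (n : ℕ) (lam : ℝ) (x : Fin n → Bool) : PMF ℕ :=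
  (binom (min (ENNReal.ofReal (lam / n)) 1) (min_le_right _ _) n).bind fun s => Cs n s x

/-- The shuffled bit-sum mechanism `Π_{n,λ}`: the random multiset `{y_1, …, y_n}`
of the outputs `y_i ~ R_{n,λ}(x_i)`. -/
noncomputable def shuffleBit (n : ℕ) (lam : ℝ) (x : Fin n → Bool) : PMF (Multiset Bool) :=
  (indep n fun i => rr n lam (x i)).map fun l => (l : Multiset Bool)

/-- The bit-sum protocol output `P_{n,λ}(x) = (n/(n-λ)) (∑ y_i - λ/2)`. -/
noncomputable def bitSumOutput (n : ℕ) (lam : ℝ) (x : Fin n → Bool) : PMF ℝ :=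
  (indep n fun i => rr n lam (x i)).map fun l =>
    ((n : ℝ) / (n - lam)) * ((l.count true : ℝ) - lam / 2)

/-- The randomized-rounding encoder `E_r`. -/
noncomputable def encoder (r : ℕ) (x : ℝ) : PMF (Fin r → Bool) :=
  (PMF.bernoulli (min (Real.toNNReal (x * r - ⌈x * r⌉ + 1)) 1) (min_le_right _ _)).map
    fun b i => if ((i : ℕ) : ℤ) + 1 < ⌈x * r⌉ then true
      else if ((i : ℕ) : ℤ) + 1 = ⌈x * r⌉ then b else false

/-- The real-sum shuffled mechanism `Π^ℝ_{n,λ,r}`: the random multiset of all `n·r`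
bits `y_{i,j} ~ R_{n,λ}(b_{i,j})` where `(b_{i,1},…,b_{i,r}) = E_r(x_i)`. -/
noncomputable def realShuffle (n : ℕ) (lam : ℝ) (r : ℕ) (X : Fin n → ℝ) :
    PMF (Multiset Bool) :=
  (indep n fun i =>
      (encoder r (X i)).bind fun b =>
        (indep r fun j => rr n lam (b j)).map fun l => (l : Multiset Bool)).map
    fun ms => ms.sum

/-- The real-sum protocol output `z = (1/r)(n/(n-λ)) (∑_{i,j} y_{i,j} - λ r/2)`. -/
noncomputable def realOutput (n : ℕ) (lam : ℝ) (r : ℕ) (X : Fin n → ℝ) : PMF ℝ :=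
  (realShuffle n lam r X).map fun m =>
    (1 / (r : ℝ)) * ((n : ℝ) / (n - lam)) * ((m.count true : ℝ) - lam * r / 2)

/-- The shuffled mechanism associated with a randomizer producing a multiset of
messages: the union (multiset sum) of the `n` users' message multisets. -/
noncomputable def shuffM {𝒳 : Type u} {𝒴 : Type v} (n : ℕ) (R : 𝒳 → PMF (Multiset 𝒴))
    (x : Fin n → 𝒳) : PMF (Multiset 𝒴) :=
  (indep n fun i => R (x i)).map fun l => l.sum

/-- The multiset of the `m` messages output by an `m`-message randomizer. -/
noncomputable def vecR {𝒳 : Type u} {𝒴 : Type v} {m : ℕ} (R : 𝒳 → PMF (Fin m → 𝒴)) :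
    𝒳 → PMF (Multiset 𝒴) :=
  fun a => (R a).map fun v => ((List.ofFn v : List 𝒴) : Multiset 𝒴)

/-- The one-message shuffled mechanism `Π_R`: the random multiset `{R(x_1), …, R(x_n)}`. -/
noncomputable def shuffle1 {𝒳 : Type u} {𝒴 : Type v} (n : ℕ) (R : 𝒳 → PMF 𝒴)
    (x : Fin n → 𝒳) : PMF (Multiset 𝒴) :=
  (indep n fun i => R (x i)).map fun l => (l : Multiset 𝒴)

/-- `(ε, δ)`-differential privacy of a local randomizer (any two inputs are neighbors). -/
def RandDP {𝒳 : Type u} {𝒴 : Type v} (R : 𝒳 → PMF 𝒴) (ε δ : ℝ) : Prop :=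
  ∀ x x' : 𝒳, ∀ T : Set 𝒴,
    (R x).toOuterMeasure T ≤
      ENNReal.ofReal (Real.exp ε) * (R x').toOuterMeasure T + ENNReal.ofReal δ

/-- The output of the local protocol `(R, A)`. -/
noncomputable def localOut {𝒳 : Type u} {𝒴 : Type v} {𝒵 : Type w} (n : ℕ)
    (R : 𝒳 → PMF 𝒴) (A : List 𝒴 → 𝒵) (X : Fin n → 𝒳) : PMF 𝒵 :=
  (indep n fun i => R (X i)).map A

/-- `(a, b)`-accuracy of a protocol `P` for a function `f` w.r.t. a distance `d`. -/
def AccFor {I : Type u} {𝒵 : Type w} (P : I → PMF 𝒵) (f : I → 𝒵) (d : 𝒵 → 𝒵 → ℝ)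
    (a b : ℝ) : Prop :=
  ∀ X, ENNReal.ofReal (1 - b) ≤ (P X).toOuterMeasure {z | d z (f X) ≤ a}

/-!
Both mechanisms only depend on the number of ones among `n` independent bits. In `C_λ`, drawing
`s ~ Bin(n, λ/n)` and then a uniform `s`-subset `H` is the same as putting each index into `H`
independently with probability `λ/n`; hence `∑_{i ∉ H} x_i + Bin(|H|, 1/2)` is the sum of the
independent bits "`x_i`, or a fair coin if `i ∈ H`", which are exactly the randomized-response
outputs `y_i`. As a multiset of `n` bits is determined by its number of ones, `Π_{n,λ}` is a
post-processing of `C_λ`, and post-processing preserves differential privacy.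
-/

section ConsSubset

variable {n : ℕ}

def consSubset (b : Bool) (H : Finset (Fin n)) : Finset (Fin (n + 1)) :=
  {i | Fin.cases (b = true) (· ∈ H) i}

@[simp]
lemma zero_mem_consSubset (b : Bool) (H : Finset (Fin n)) : 0 ∈ consSubset b H ↔ b = true := by
  simp [consSubset]

@[simp]
lemma succ_mem_consSubset (b : Bool) (H : Finset (Fin n)) (i : Fin n) :
    i.succ ∈ consSubset b H ↔ i ∈ H := by
  simp [consSubset]

lemma card_consSubset (b : Bool) (H : Finset (Fin n)) :
    (consSubset b H).card = H.card + b.toNat := by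
  rw [consSubset, Fin.card_filter_univ_succ']
  cases b <;> simp [add_comm]

lemma consSubset_inj {b c : Bool} {H K : Finset (Fin n)} :
    consSubset b H = consSubset c K ↔ b = c ∧ H = K := by
  refine ⟨fun h => ⟨?_, ?_⟩, fun ⟨hb, hH⟩ => hb ▸ hH ▸ rfl⟩
  · simpa using Finset.ext_iff.1 h 0
  · ext i; simpa using Finset.ext_iff.1 h i.succ

lemma exists_consSubset_eq (K : Finset (Fin (n + 1))) : ∃ b H, consSubset b H = K :=
  ⟨decide (0 ∈ K), ({i | i.succ ∈ K} : Finset (Fin n)), by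
    ext i
    cases i using Fin.cases <;> simp⟩

lemma map_consSubset_apply (q : PMF (Finset (Fin n))) (b c : Bool) (H : Finset (Fin n)) :
    q.map (consSubset c) (consSubset b H) = if c = b then q H else 0 := by
  rw [PMF.map_apply]
  split_ifs with h
  · subst h
    exact (tsum_eq_single H fun K hK => if_neg (by simp [consSubset_inj, Ne.symm hK])).trans
      (if_pos rfl)
  · exact ENNReal.tsum_eq_zero.2 fun K => if_neg (by simp [consSubset_inj, Ne.symm h])

end ConsSubset

section BernoulliSubset

variable {p : ℝ≥0∞}

lemma toNNReal_le_one_of_le_one (hp : p ≤ 1) : p.toNNReal ≤ 1 := by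
  simpa using ENNReal.toNNReal_mono ENNReal.one_ne_top hp

lemma coe_toNNReal_of_le_one (hp : p ≤ 1) : (p.toNNReal : ℝ≥0∞) = p :=
  ENNReal.coe_toNNReal (ne_top_of_le_ne_top ENNReal.one_ne_top hp)

lemma binom_apply (hp : p ≤ 1) (m k : ℕ) :
    binom p hp m k = m.choose k * p ^ k * (1 - p) ^ (m - k) := by
  -- `binom` carries a proof of `p.toNNReal ≤ ENNReal.toNNReal 1`, which `rw` cannot match
  rw [show binom p hp m = (PMF.binomial _ (toNNReal_le_one_of_le_one hp) m).map Fin.val from rfl,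
    PMF.map_apply]
  rcases le_or_gt k m with hk | hk
  · rw [tsum_eq_single (⟨k, Nat.lt_succ_of_le hk⟩ : Fin (m + 1)), if_pos rfl,
      PMF.binomial_apply]
    · simp [coe_toNNReal_of_le_one hp]
      ring
    · intro b hb
      rw [if_neg]
      exact fun h => hb (Fin.ext h.symm)
  · rw [Nat.choose_eq_zero_of_lt hk]
    simp only [Nat.cast_zero, zero_mul]
    exact ENNReal.tsum_eq_zero.2 fun b => if_neg (by omega)

lemma sum_pow_card_mul_one_sub_pow_sub_card (hp : p ≤ 1) (n : ℕ) :
    ∑ H : Finset (Fin n), p ^ H.card * (1 - p) ^ (n - H.card) = 1 := by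
  have := Fintype.prod_add (fun _ : Fin n => p) (fun _ => 1 - p)
  simp only [Finset.prod_const, Finset.card_univ, Fintype.card_fin, Finset.card_compl] at this
  rw [← this, add_tsub_cancel_of_le hp, one_pow]

def bernoulliSubset (hp : p ≤ 1) (n : ℕ) : PMF (Finset (Fin n)) :=
  PMF.ofFintype (fun H => p ^ H.card * (1 - p) ^ (n - H.card))
    (sum_pow_card_mul_one_sub_pow_sub_card hp n)

lemma bernoulliSubset_apply (hp : p ≤ 1) {n : ℕ} (H : Finset (Fin n)) :
    bernoulliSubset hp n H = p ^ H.card * (1 - p) ^ (n - H.card) := rfl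

lemma uniformSubset_apply {n s : ℕ} (hs : s ≤ n) (H : Finset (Fin n)) :
    uniformSubset n s H = if H.card = s then ((n.choose s : ℝ≥0∞))⁻¹ else 0 := by
  simp [uniformSubset, hs, PMF.uniformOfFinset_apply]

lemma binom_bind_uniformSubset (hp : p ≤ 1) (n : ℕ) :
    (binom p hp n).bind (uniformSubset n) = bernoulliSubset hp n := by
  ext H
  have hH : H.card ≤ n := by simpa using Finset.card_le_univ H
  rw [PMF.bind_apply, tsum_eq_single H.card, binom_apply, uniformSubset_apply hH, if_pos rfl,
    bernoulliSubset_apply]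
  · have : (n.choose H.card : ℝ≥0∞) ≠ 0 := by exact_mod_cast (Nat.choose_pos hH).ne'
    rw [mul_comm, ← mul_assoc, ← mul_assoc, ENNReal.inv_mul_cancel this (by simp), one_mul]
  · intro s hs
    rcases le_or_gt s n with h | h
    · rw [uniformSubset_apply h, if_neg (Ne.symm hs), mul_zero]
    · rw [binom_apply, Nat.choose_eq_zero_of_lt h]; simp

lemma bernoulliSubset_succ (hp : p ≤ 1) (n : ℕ) :
    bernoulliSubset hp (n + 1) =
      (PMF.bernoulli p.toNNReal (toNNReal_le_one_of_le_one hp)).bind fun b =>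
        (bernoulliSubset hp n).map (consSubset b) := by
  ext K
  obtain ⟨b, H, rfl⟩ := exists_consSubset_eq K
  have hH : H.card ≤ n := by simpa using Finset.card_le_univ H
  rw [PMF.bind_apply, tsum_bool, map_consSubset_apply, map_consSubset_apply,
    bernoulliSubset_apply, bernoulliSubset_apply, card_consSubset]
  cases b
  · simp [PMF.bernoulli_apply, coe_toNNReal_of_le_one hp, Nat.sub_add_comm hH, pow_succ]
    ring
  · simp [PMF.bernoulli_apply, coe_toNNReal_of_le_one hp, pow_succ]
    ring

lemma map_card_bernoulliSubset (hp : p ≤ 1) (n : ℕ) :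
    (bernoulliSubset hp n).map Finset.card = binom p hp n := by
  ext k
  have hfiber : Finset.card ⁻¹' {k} =
      ((Finset.univ.powersetCard k : Finset (Finset (Fin n))) : Set (Finset (Fin n))) := by
    ext; simp [eq_comm]
  rw [← PMF.toOuterMeasure_apply_singleton, PMF.toOuterMeasure_map_apply, hfiber,
    PMF.toOuterMeasure_apply_finset, Finset.sum_congr rfl fun H hH => by
      rw [bernoulliSubset_apply, Finset.mem_powersetCard_univ.1 hH]]
  simp [binom_apply, Finset.card_powersetCard, mul_assoc]

lemma binom_zero (hp : p ≤ 1) : binom p hp 0 = PMF.pure 0 := by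
  ext k
  cases k <;> simp [binom_apply]

lemma binom_succ (hp : p ≤ 1) (n : ℕ) :
    binom p hp (n + 1) =
      (PMF.bernoulli p.toNNReal (toNNReal_le_one_of_le_one hp)).bind fun b =>
        (binom p hp n).map (· + b.toNat) := by
  simp only [← map_card_bernoulliSubset, bernoulliSubset_succ, PMF.map_bind, PMF.map_comp]
  congr! 3 with b
  exact funext (card_consSubset b)

def resample (b a : Bool) : PMF Bool :=
  if b then PMF.bernoulli 2⁻¹ (by norm_num) else PMF.pure a

def randomizedResponse (hp : p ≤ 1) (a : Bool) : PMF Bool :=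
  (PMF.bernoulli p.toNNReal (toNNReal_le_one_of_le_one hp)).bind fun b => resample b a

lemma sumOutside_consSubset {n : ℕ} (b : Bool) (H : Finset (Fin n)) (x : Fin (n + 1) → Bool) :
    sumOutside (consSubset b H) x =
      (if b then 0 else (x 0).toNat) + sumOutside H (fun i => x i.succ) := by
  rw [sumOutside, sumOutside, ← Finset.univ_inter (consSubset b H)ᶜ, ← Finset.univ_inter Hᶜ,
    ← Finset.sum_ite_mem, ← Finset.sum_ite_mem, Fin.sum_univ_succ]
  cases b <;> cases x 0 <;> simp

lemma CH_consSubset {n : ℕ} (b : Bool) (H : Finset (Fin n)) (x : Fin (n + 1) → Bool) :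
    CH (n + 1) (consSubset b H) x =
      (resample b (x 0)).bind fun y => (CH n H fun i => x i.succ).map (y.toNat + ·) := by
  rw [CH, CH, card_consSubset, sumOutside_consSubset]
  cases b
  · simp only [resample, Bool.false_eq_true, if_false, PMF.pure_bind, PMF.map_comp,
      Bool.toNat_false, add_zero]
    congr 1
    funext B
    simp only [Function.comp_apply, add_assoc]
  · have h : PMF.bernoulli (2⁻¹ : ℝ≥0∞).toNNReal (toNNReal_le_one_of_le_one half_le_one) =
        PMF.bernoulli 2⁻¹ (by norm_num) := by
      congr; simp [ENNReal.toNNReal_ofNat]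
    simp only [resample, if_true, Bool.toNat_true, binom_succ, h, PMF.map_bind, PMF.map_comp]
    congr 1
    funext y
    congr 1
    funext B
    simp only [Function.comp_apply]
    ring

lemma map_count_indep_succ {n : ℕ} (f : Fin (n + 1) → PMF Bool) :
    (indep (n + 1) f).map (List.count true) =
      (f 0).bind fun y =>
        ((indep n fun i => f i.succ).map (List.count true)).map (y.toNat + ·) := by
  rw [indep, PMF.map_bind]
  congr 1
  funext y
  rw [PMF.map_bind, PMF.map_comp, ← PMF.bind_pure_comp]
  congr 1
  funext l
  rw [PMF.pure_map]
  cases y <;> simp [add_comm]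

lemma bernoulliSubset_bind_CH (hp : p ≤ 1) (n : ℕ) (x : Fin n → Bool) :
    (bernoulliSubset hp n).bind (fun H => CH n H x) =
      (indep n fun i => randomizedResponse hp (x i)).map (List.count true) := by
  induction n with
  | zero =>
    have hCH (H : Finset (Fin 0)) : CH 0 H x = PMF.pure 0 := by
      obtain rfl : H = ∅ := Subsingleton.elim _ _
      rw [CH, Finset.card_empty, binom_zero, PMF.pure_map]
      simp [sumOutside]
    simp [hCH, indep, PMF.pure_map]
  | succ n ih =>
    rw [map_count_indep_succ, randomizedResponse, PMF.bind_bind, bernoulliSubset_succ,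
      PMF.bind_bind]
    congr 1
    funext b
    rw [PMF.bind_map]
    simp only [Function.comp_def, CH_consSubset]
    rw [PMF.bind_comm]
    congr 1
    funext y
    rw [← PMF.map_bind, ih]

end BernoulliSubset

lemma rr_eq_randomizedResponse (n : ℕ) (lam : ℝ) (a : Bool) :
    rr n lam a = randomizedResponse (min_le_right (ENNReal.ofReal (lam / n)) 1) a := by
  have hq : (min (ENNReal.ofReal (lam / n)) 1).toNNReal = min (lam / n).toNNReal 1 := by
    rw [ENNReal.ofReal, ← ENNReal.coe_one, ← ENNReal.coe_min, ENNReal.toNNReal_coe]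
  simp only [rr, randomizedResponse, resample, hq]

lemma Cmech_eq_map_count (n : ℕ) (lam : ℝ) (x : Fin n → Bool) :
    Cmech n lam x = (indep n fun i => rr n lam (x i)).map (List.count true) := by
  simp only [rr_eq_randomizedResponse, ← bernoulliSubset_bind_CH, ← binom_bind_uniformSubset,
    PMF.bind_bind]
  rfl

lemma length_of_mem_support_indep {α : Type u} :
    ∀ {n : ℕ} {f : Fin n → PMF α} {l : List α}, l ∈ (indep n f).support → l.length = n
  | 0, _, _, hl => by simp_all [indep]
  | n + 1, _, _, hl => by
    simp only [indep, PMF.support_bind, PMF.support_pure, Set.mem_iUnion,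
      Set.mem_singleton_iff] at hl
    obtain ⟨_, _, _, hys, rfl⟩ := hl
    simp [length_of_mem_support_indep hys]

lemma PMF.map_congr_of_mem_support {α β : Type*} {q : PMF α} {f g : α → β}
    (h : ∀ a ∈ q.support, f a = g a) : q.map f = q.map g := by
  ext b
  simp only [PMF.map_apply]
  refine tsum_congr fun a => ?_
  by_cases ha : a ∈ q.support
  · rw [h a ha]
  · simp [(PMF.apply_eq_zero_iff q a).2 ha]

def boolMultiset (n k : ℕ) : Multiset Bool :=
  Multiset.replicate k true + Multiset.replicate (n - k) false

lemma coe_eq_boolMultiset (l : List Bool) :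
    (l : Multiset Bool) = boolMultiset l.length (l.count true) := by
  ext b
  cases b <;> simp [boolMultiset, Multiset.count_replicate, ← List.count_false_add_count_true]

lemma shuffleBit_eq_map_Cmech (n : ℕ) (lam : ℝ) (x : Fin n → Bool) :
    shuffleBit n lam x = (Cmech n lam x).map (boolMultiset n) := by
  rw [shuffleBit, Cmech_eq_map_count, PMF.map_comp]
  -- the coercion `List Bool → Multiset Bool` in `shuffleBit` elaborates through the `PMF` monad
  refine (PMF.map_id _).trans (PMF.map_congr_of_mem_support fun l hl => ?_)
  rw [coe_eq_boolMultiset, length_of_mem_support_indep hl, Function.comp_apply]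

lemma DPFor.map {I : Type u} {Z : Type v} {W : Type w} {nbr : I → I → Prop} {M : I → PMF Z}
    {ε δ : ℝ} (hM : DPFor nbr M ε δ) (f : Z → W) :
    DPFor nbr (fun x => (M x).map f) ε δ := by
  intro x x' hx T
  simp only [PMF.toOuterMeasure_map_apply]
  exact hM x x' hx (f ⁻¹' T)

theorem stmt1_general (n : ℕ) (lam : ℝ) (eps del : ℝ)
    (hC : DPFor Neighbor (Cmech n lam) eps del) :
    DPFor Neighbor (shuffleBit n lam) eps del := by
  rw [show shuffleBit n lam = fun x => (Cmech n lam x).map (boolMultiset n) from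
    funext (shuffleBit_eq_map_Cmech n lam)]
  exact hC.map _

/-- if `C_λ` is `(ε,δ)`-DP then the shuffled bit-sum mechanism
`Π_{n,λ}` is `(ε,δ)`-DP. -/
theorem stmt1 (n : ℕ) (lam : ℝ) (hlam0 : 0 < lam) (hlamn : lam < n) (eps del : ℝ)
    (hC : DPFor Neighbor (Cmech n lam) eps del) :
    DPFor Neighbor (shuffleBit n lam) eps del :=
  stmt1_general n lam eps del hC

end ShuffledDP
end
end

section
/- Let R : 𝒳 → PMF(𝒴) be a local randomizer and n ∈ ℕ, and suppose the one-message shuffled mechanism Π_R on datasets of size n is (ε_S, δ_S)-differentially private. Then R itself is (ε_S + ln n, δ_S)-differentially private: for all x, x' ∈ 𝒳 and all sets Y₀ ⊆ 𝒴, Pr[R(x) ∈ Y₀] ≤ n·e^{ε_S}·Pr[R(x') ∈ Y₀] + δ_S. -/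
/-!
Feed the shuffler the neighbouring datasets `(x, x', …, x')` and `(x', …, x')` and test the
event "some message lies in `Y₀`". Under the first dataset this event is at least as likely
as `R x ∈ Y₀`; under the second, by the union bound, it has probability at most
`n · Pr[R x' ∈ Y₀]`. Differential privacy of the shuffled mechanism links the two.
-/

open scoped ENNReal Classical

noncomputable section

namespace ShuffledDP

universe u v w

theorem _root_.PMF.toOuterMeasure_le_one {α : Type u} (p : PMF α) (s : Set α) :
    p.toOuterMeasure s ≤ 1 :=
  (p.toOuterMeasure_apply_eq_one_iff Set.univ).2 (Set.subset_univ _) ▸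
    p.toOuterMeasure.mono (Set.subset_univ s)

section indep

variable {α : Type u}

theorem toOuterMeasure_indep_succ_apply (n : ℕ) (f : Fin (n + 1) → PMF α) (s : Set (List α)) :
    (indep (n + 1) f).toOuterMeasure s =
      ∑' y, f 0 y * (indep n fun i => f i.succ).toOuterMeasure ((y :: ·) ⁻¹' s) := by
  rw [indep, PMF.toOuterMeasure_bind_apply]
  exact tsum_congr fun y => by rw [← PMF.toOuterMeasure_map_apply]; rfl

theorem toOuterMeasure_le_indep_exists_mem :
    ∀ {n : ℕ} (f : Fin n → PMF α) (i : Fin n) (S : Set α),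
      (f i).toOuterMeasure S ≤ (indep n f).toOuterMeasure {l | ∃ y ∈ l, y ∈ S}
  | n + 1, f, i, S => by
    rw [toOuterMeasure_indep_succ_apply]
    induction i using Fin.cases with
    | zero =>
      rw [PMF.toOuterMeasure_apply]
      refine ENNReal.tsum_le_tsum fun y => ?_
      by_cases hy : y ∈ S
      · have hcons : (y :: ·) ⁻¹' {l | ∃ z ∈ l, z ∈ S} = Set.univ :=
          Set.eq_univ_of_forall fun l => ⟨y, List.mem_cons_self, hy⟩
        simp [hy, hcons, (PMF.toOuterMeasure_apply_eq_one_iff _ _).2 (Set.subset_univ _)]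
      · simp [hy]
    | succ j =>
      calc (f j.succ).toOuterMeasure S
          ≤ (indep n fun i => f i.succ).toOuterMeasure {l | ∃ z ∈ l, z ∈ S} :=
            toOuterMeasure_le_indep_exists_mem (fun i => f i.succ) j S
        _ = ∑' y, f 0 y * (indep n fun i => f i.succ).toOuterMeasure {l | ∃ z ∈ l, z ∈ S} := by
            rw [ENNReal.tsum_mul_right, PMF.tsum_coe, one_mul]
        _ ≤ _ := by
            gcongr with y
            exact fun l ⟨z, hz, hzS⟩ => ⟨z, List.mem_cons_of_mem y hz, hzS⟩

theorem indep_exists_mem_le_sum :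
    ∀ {n : ℕ} (f : Fin n → PMF α) (S : Set α),
      (indep n f).toOuterMeasure {l | ∃ y ∈ l, y ∈ S} ≤ ∑ i, (f i).toOuterMeasure S
  | 0, f, S => by simp [indep]
  | n + 1, f, S => by
    set tail := indep n fun i => f i.succ
    have hcons (y : α) : tail.toOuterMeasure ((y :: ·) ⁻¹' {l | ∃ z ∈ l, z ∈ S}) ≤
        S.indicator 1 y + tail.toOuterMeasure {l | ∃ z ∈ l, z ∈ S} := by
      by_cases hy : y ∈ S
      · simpa [hy] using le_add_right (PMF.toOuterMeasure_le_one tail _)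
      · refine le_add_left (tail.toOuterMeasure.mono fun l ⟨z, hz, hzS⟩ => ?_)
        rcases List.mem_cons.1 hz with rfl | hz
        exacts [absurd hzS hy, ⟨z, hz, hzS⟩]
    calc (indep (n + 1) f).toOuterMeasure {l | ∃ y ∈ l, y ∈ S}
        ≤ ∑' y, f 0 y * (S.indicator 1 y + tail.toOuterMeasure {l | ∃ z ∈ l, z ∈ S}) := by
          rw [toOuterMeasure_indep_succ_apply]
          gcongr with y
          exact hcons y
      _ = (f 0).toOuterMeasure S + tail.toOuterMeasure {l | ∃ z ∈ l, z ∈ S} := by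
          simp only [mul_add, ENNReal.tsum_add, ENNReal.tsum_mul_right, PMF.tsum_coe, one_mul,
            PMF.toOuterMeasure_apply, ← Set.indicator_mul_right, Pi.one_apply, mul_one]
      _ ≤ ∑ i, (f i).toOuterMeasure S := by
          rw [Fin.sum_univ_succ]
          gcongr
          exact indep_exists_mem_le_sum _ S

end indep

section shuffle

variable {𝒳 : Type u} {𝒴 : Type v}

theorem shuffle1_toOuterMeasure_exists_mem (n : ℕ) (R : 𝒳 → PMF 𝒴) (X : Fin n → 𝒳)
    (S : Set 𝒴) :
    (shuffle1 n R X).toOuterMeasure {m | ∃ y ∈ m, y ∈ S} =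
      (indep n fun i => R (X i)).toOuterMeasure {l | ∃ y ∈ l, y ∈ S} := by
  -- `shuffle1` elaborates to `map id (p >>= pure ∘ (↑))`: the coercion is lifted into the monad.
  rw [shuffle1, PMF.toOuterMeasure_map_apply]
  exact PMF.toOuterMeasure_map_apply (fun l : List 𝒴 => (l : Multiset 𝒴)) _ _

end shuffle

/-- if the one-message shuffled mechanism `Π_R` on datasets of size
`n ≥ 1` is `(ε_S, δ_S)`-DP, then `R` itself is `(ε_S + ln n, δ_S)`-DP:
`Pr[R(x) ∈ Y₀] ≤ n e^{ε_S} Pr[R(x') ∈ Y₀] + δ_S`. -/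
theorem stmt15 {𝒳 : Type u} {𝒴 : Type v} (R : 𝒳 → PMF 𝒴) (n : ℕ) (hn : 1 ≤ n)
    (epsS delS : ℝ) (hdp : DPFor Neighbor (shuffle1 n R) epsS delS) :
    ∀ x x' : 𝒳, ∀ Y₀ : Set 𝒴,
      (R x).toOuterMeasure Y₀ ≤
        (n : ℝ≥0∞) * ENNReal.ofReal (Real.exp epsS) * (R x').toOuterMeasure Y₀ +
          ENNReal.ofReal delS := by
  intro x x' Y₀
  let i₀ : Fin n := ⟨0, hn⟩
  let X : Fin n → 𝒳 := Function.update (fun _ => x') i₀ x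
  have hX : Neighbor X fun _ => x' := ⟨i₀, fun i hi => Function.update_of_ne hi _ _⟩
  calc (R x).toOuterMeasure Y₀
      ≤ (shuffle1 n R X).toOuterMeasure {m | ∃ y ∈ m, y ∈ Y₀} := by
        rw [shuffle1_toOuterMeasure_exists_mem]
        simpa [X] using toOuterMeasure_le_indep_exists_mem (fun i => R (X i)) i₀ Y₀
    _ ≤ ENNReal.ofReal (Real.exp epsS) *
          (shuffle1 n R fun _ => x').toOuterMeasure {m | ∃ y ∈ m, y ∈ Y₀} +
          ENNReal.ofReal delS := hdp _ _ hX _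
    _ ≤ ENNReal.ofReal (Real.exp epsS) * (n * (R x').toOuterMeasure Y₀) +
          ENNReal.ofReal delS := by
        rw [shuffle1_toOuterMeasure_exists_mem]
        gcongr
        simpa using indep_exists_mem_le_sum (fun _ : Fin n => R x') Y₀
    _ = _ := by ring

end ShuffledDP
end
end
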